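/- Sequential measurement (non-commutative union bound, quantitative version): Let ρ be a density operator and Π₁,…,Π_k orthogonal projectors. Writing Π'_i := I − Π_i, we have Tr(Π'_k Π'_{k−1} ⋯ Π'_1 ρ Π'_1 ⋯ Π'_{k−1} Π'_k) ≥ 1 − 4 Σ_{i=1}^k Tr(Π_i ρ). -/

import Mathlib

open Matrix Kronecker Complex ComplexOrder

noncomputable section

namespace QIT

open scoped Classical

variable {n : Type*} [Fintype n] [DecidableEq n]

/-- Square root of a positive semidefinite matrix (junk value `0` otherwise). -/
def msqrt (A : Matrix n n ℂ) : Matrix n n ℂ :=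
  if h : A.PosSemidef then
    (h.1.eigenvectorUnitary : Matrix n n ℂ) *
      Matrix.diagonal (((↑) : ℝ → ℂ) ∘ (Real.sqrt ·) ∘ h.1.eigenvalues) *
      (star h.1.eigenvectorUnitary : Matrix n n ℂ)
  else 0

/-- Fidelity `F(ρ,σ) = Tr √(√σ ρ √σ)`. -/
def fid (ρ σ : Matrix n n ℂ) : ℝ :=
  ((msqrt (msqrt σ * ρ * msqrt σ)).trace).re

/-- Purified distance `P(ρ,σ) = √(1 - F(ρ,σ)²)`. -/
def Pdist (ρ σ : Matrix n n ℂ) : ℝ := Real.sqrt (1 - fid ρ σ ^ 2)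

/-- A density operator: positive semidefinite with unit trace. -/
def IsDensity (ρ : Matrix n n ℂ) : Prop := ρ.PosSemidef ∧ ρ.trace = 1

/-- A test (POVM element): `0 ≤ Λ ≤ I`. -/
def IsTest (Λ : Matrix n n ℂ) : Prop := Λ.PosSemidef ∧ (1 - Λ).PosSemidef

/-- Smooth hypothesis testing divergence `D_H^ε(ρ‖σ)` (log base 2). -/
def DH (ε : ℝ) (ρ σ : Matrix n n ℂ) : ℝ :=
  sSup {x : ℝ | ∃ Λ : Matrix n n ℂ, IsTest Λ ∧ (Λ * ρ).trace.re ≥ 1 - ε ∧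
    x = Real.logb 2 (1 / (Λ * σ).trace.re)}

/-- Max-relative entropy `D_max(ρ‖σ)`. -/
def Dmax (ρ σ : Matrix n n ℂ) : ℝ :=
  sInf {l : ℝ | ((((2:ℝ) ^ l : ℝ) : ℂ) • σ - ρ).PosSemidef}

/-- Matrix logarithm (base 2) via the spectral decomposition. -/
def mlog (A : Matrix n n ℂ) : Matrix n n ℂ :=
  if h : A.IsHermitian then
    (h.eigenvectorUnitary : Matrix n n ℂ) *
      Matrix.diagonal (fun i => (Real.logb 2 (h.eigenvalues i) : ℂ)) *
      (h.eigenvectorUnitary : Matrix n n ℂ)ᴴ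
  else 0

/-- Quantum relative entropy `D(ρ‖σ) = Tr ρ (log ρ - log σ)` (log base 2). -/
def Drel (ρ σ : Matrix n n ℂ) : ℝ :=
  ((ρ * mlog ρ).trace - (ρ * mlog σ).trace).re

/-- Square root of the Moore–Penrose inverse, on the support. -/
def pinvSqrt (A : Matrix n n ℂ) : Matrix n n ℂ :=
  if h : A.IsHermitian then
    (h.eigenvectorUnitary : Matrix n n ℂ) *
      Matrix.diagonal (fun i =>
        ((if h.eigenvalues i = 0 then 0 else (Real.sqrt (h.eigenvalues i))⁻¹ : ℝ) : ℂ)) *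
      (h.eigenvectorUnitary : Matrix n n ℂ)ᴴ
  else 0

variable {m : Type*} [Fintype m] [DecidableEq m]

/-- Partial trace over the second tensor factor. -/
def ptraceSnd (ρ : Matrix (n × m) (n × m) ℂ) : Matrix n n ℂ :=
  Matrix.of fun i j => ∑ k, ρ (i, k) (j, k)

/-- Partial trace over the first tensor factor. -/
def ptraceFst (ρ : Matrix (n × m) (n × m) ℂ) : Matrix m m ℂ :=
  Matrix.of fun i j => ∑ k, ρ (k, i) (k, j)

/-! Let `ψⱼ₊₁ = ψⱼ - Pⱼ ψⱼ`. By Pythagoras the loss `‖ψ₀‖² - ‖ψₖ‖²` equals `A = ∑ ‖Pⱼ ψⱼ‖²`.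
Since `ψ₀ - ψₖ = ∑ Pⱼ ψⱼ`, the loss is also at most `2 Re ⟪ψ₀, ψ₀ - ψₖ⟫ = 2 ∑ Re ⟪Pⱼ ψ₀, Pⱼ ψⱼ⟫`,
which by Cauchy–Schwarz is at most `2 √(∑ ‖Pⱼ ψ₀‖²) √A`; hence `A ≤ 4 ∑ ‖Pⱼ ψ₀‖²`.
For matrices, take `ψ₀ = 1` in the semi-inner product `⟪x, y⟫ = Tr (y ρ xᴴ)`, for which left
multiplication by an orthogonal projection `P` is a symmetric projection and `‖P‖² = Tr (P ρ)`. -/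

open Finset

section InnerProductSpace

variable {𝕜 E : Type*} [RCLike 𝕜] [SeminormedAddCommGroup E] [InnerProductSpace 𝕜 E]

lemma _root_.LinearMap.IsSymmetricProjection.inner_apply_right {T : E →ₗ[𝕜] E}
    (hT : T.IsSymmetricProjection) (x y : E) : inner 𝕜 x (T y) = inner 𝕜 (T x) (T y) := by
  rw [hT.isSymmetric, ← Module.End.mul_apply, hT.isIdempotentElem.eq]

lemma _root_.LinearMap.IsSymmetricProjection.norm_sub_apply_sq {T : E →ₗ[𝕜] E}
    (hT : T.IsSymmetricProjection) (x : E) : ‖x - T x‖ ^ 2 = ‖x‖ ^ 2 - ‖T x‖ ^ 2 := by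
  rw [norm_sub_sq (𝕜 := 𝕜), hT.inner_apply_right, inner_self_eq_norm_sq]
  ring

theorem _root_.norm_sq_sub_norm_sq_le_of_sequential_projections {p : ℕ → E →ₗ[𝕜] E}
    (hp : ∀ j, (p j).IsSymmetricProjection) {ψ : ℕ → E}
    (hψ : ∀ j, ψ (j + 1) = ψ j - p j (ψ j)) (k : ℕ) :
    ‖ψ 0‖ ^ 2 - ‖ψ k‖ ^ 2 ≤ 4 * ∑ j ∈ range k, ‖p j (ψ 0)‖ ^ 2 := by
  set D := ∑ j ∈ range k, ‖p j (ψ 0)‖ ^ 2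
  set A := ∑ j ∈ range k, ‖p j (ψ j)‖ ^ 2
  set S := ∑ j ∈ range k, ‖p j (ψ 0)‖ * ‖p j (ψ j)‖
  have hloss : ‖ψ 0‖ ^ 2 - ‖ψ k‖ ^ 2 = A := by
    rw [← sum_range_sub' (fun j => ‖ψ j‖ ^ 2)]
    refine sum_congr rfl fun j _ => ?_
    rw [hψ, (hp j).norm_sub_apply_sq]
    ring
  have hdiff : ψ 0 - ψ k = ∑ j ∈ range k, p j (ψ j) := by
    rw [← sum_range_sub' ψ]
    exact sum_congr rfl fun j _ => by rw [hψ, sub_sub_cancel]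
  have hAS : A ≤ 2 * S := calc
    A ≤ 2 * RCLike.re (inner 𝕜 (ψ 0) (ψ 0 - ψ k)) := by
      have h := norm_sub_sq (𝕜 := 𝕜) (ψ 0) (ψ 0 - ψ k)
      rw [sub_sub_cancel] at h
      nlinarith [sq_nonneg ‖ψ 0 - ψ k‖]
    _ = 2 * ∑ j ∈ range k, RCLike.re (inner 𝕜 (p j (ψ 0)) (p j (ψ j))) := by
      rw [hdiff, inner_sum, map_sum]
      congr 2 with j
      rw [(hp j).inner_apply_right]
    _ ≤ 2 * S := by
      gcongr
      exact sum_le_sum fun j _ => re_inner_le_norm _ _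
  have hSA : S ^ 2 ≤ D * A := sum_mul_sq_le_sq_mul_sq _ _ _
  have hA : 0 ≤ A := sum_nonneg fun _ _ => sq_nonneg _
  rw [hloss]
  rcases hA.eq_or_lt with hA0 | hApos
  · rw [← hA0]
    positivity
  · refine le_of_mul_le_mul_right ?_ hApos
    nlinarith

end InnerProductSpace

theorem _root_.Matrix.re_trace_sub_le_of_sequential_projections {ι 𝕜 : Type*} [Fintype ι]
    [DecidableEq ι] [RCLike 𝕜] {ρ : Matrix ι ι 𝕜} (hρ : ρ.PosSemidef)
    {P : ℕ → Matrix ι ι 𝕜} (hP : ∀ j, IsStarProjection (P j)) (k : ℕ) :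
    RCLike.re ρ.trace - RCLike.re (((List.range k).map fun j => 1 - P j).reverse.prod * ρ *
      (((List.range k).map fun j => 1 - P j).reverse.prod)ᴴ).trace ≤
      4 * ∑ j ∈ range k, RCLike.re (P j * ρ).trace := by
  let := ρ.toMatrixSeminormedAddCommGroup hρ
  let := ρ.toMatrixInnerProductSpace hρ
  have norm_sq (x : Matrix ι ι 𝕜) : ‖x‖ ^ 2 = RCLike.re (x * ρ * xᴴ).trace := by
    rw [← inner_self_eq_norm_sq (𝕜 := 𝕜)]
    rfl
  have hherm (j : ℕ) : (P j)ᴴ = P j := (hP j).isSelfAdjoint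
  have hmulLeft (j : ℕ) : (LinearMap.mulLeft 𝕜 (P j)).IsSymmetricProjection := by
    refine ⟨LinearMap.ext fun x => ?_, fun x y => ?_⟩
    · simp only [Module.End.mul_apply, LinearMap.mulLeft_apply, ← Matrix.mul_assoc,
        (hP j).isIdempotentElem.eq]
    · change (y * ρ * (P j * x)ᴴ).trace = (P j * y * ρ * xᴴ).trace
      rw [conjTranspose_mul, hherm, ← Matrix.mul_assoc, trace_mul_comm, ← Matrix.mul_assoc,
        ← Matrix.mul_assoc]
  have key := norm_sq_sub_norm_sq_le_of_sequential_projections hmulLeft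
    (ψ := fun m => ((List.range m).map fun j => 1 - P j).reverse.prod)
    (fun m => by simp [List.range_succ, sub_mul]) k
  have hproj (j : ℕ) : (P j * ρ * (P j)ᴴ).trace = (P j * ρ).trace := by
    rw [hherm, trace_mul_cycle, (hP j).isIdempotentElem.eq]
  simpa [norm_sq, hproj] using key

/-- sequential measurement (non-commutative union bound). -/
theorem statement5 {n : Type*} [Fintype n] [DecidableEq n] (k : ℕ)
    (P : Fin k → Matrix n n ℂ) (hP : ∀ i, (P i).IsHermitian ∧ P i * P i = P i)
    (ρ : Matrix n n ℂ) (hρ : IsDensity ρ) :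
    1 - 4 * ∑ i, (P i * ρ).trace.re ≤
      (((List.ofFn fun i => (1 : Matrix n n ℂ) - P i).reverse.prod * ρ *
        ((List.ofFn fun i => (1 : Matrix n n ℂ) - P i).reverse.prod)ᴴ).trace).re := by
  set Pe : ℕ → Matrix n n ℂ := Function.extend Fin.val P 0
  have hPe_apply (i : Fin k) : Pe i = P i := Fin.val_injective.extend_apply P 0 i
  have hPe (j : ℕ) : IsStarProjection (Pe j) := by
    by_cases h : ∃ i : Fin k, (i : ℕ) = j
    · obtain ⟨i, rfl⟩ := h
      rw [hPe_apply]
      exact ⟨(hP i).2, (hP i).1⟩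
    · rw [show Pe j = 0 from Function.extend_apply' _ _ _ h]
      exact IsStarProjection.zero _
  have hlist : (List.ofFn fun i => (1 : Matrix n n ℂ) - P i) =
      (List.range k).map fun j => 1 - Pe j := by
    rw [List.ofFn_eq_map, ← List.map_coe_finRange_eq_range, List.map_map]
    simp only [Function.comp_def, hPe_apply]
  have hsum : ∑ i, (P i * ρ).trace.re = ∑ j ∈ range k, RCLike.re (Pe j * ρ).trace := by
    rw [← Fin.sum_univ_eq_sum_range (fun j => RCLike.re (Pe j * ρ).trace) k]
    simp only [hPe_apply, RCLike.re_to_complex]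
  have key := Matrix.re_trace_sub_le_of_sequential_projections hρ.1 hPe k
  rw [← hlist, ← hsum, hρ.2] at key
  simp only [RCLike.re_to_complex, Complex.one_re] at key
  linarith

end QIT
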